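/- Let G be a group and a ∈ G with a ≠ 1 such that every element g ∈ G with g ≠ 1 is conjugate to a (in particular this holds when any two nontrivial elements of G are conjugate, as in Osin's monster groups). Let X = {x : G → Fin 3 | for all g ∈ G, x(g * a) ≠ x(g)}. Then X is nonempty and Stab(x) = {1} for every x ∈ X. -/
import Mathlib

/-- The shift action of a group `G` on configurations: `(g • x) h = x (g⁻¹ h)`. -/
def Shift {G A : Type*} [Group G] (g : G) (x : G → A) : G → A :=
  fun h => x (g⁻¹ * h)

/-- The stabilizer of a configuration under the shift action. -/
def Stab {G A : Type*} [Group G] (x : G → A) : Set G :=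
  {g | Shift g x = x}

/-- Coloring of ℤ mod n (n the order) by 3 colors so that successive values differ. -/
def col (n : ℕ) (k : ℤ) : Fin 3 :=
  if n = 0 then (if k % 2 = 0 then 0 else 1)
  else if k % n = (n : ℤ) - 1 then 2 else (if (k % n) % 2 = 0 then 0 else 1)

lemma col_congr (n : ℕ) {j k : ℤ} (h : (n : ℤ) ∣ j - k) : col n j = col n k := by
  unfold col
  rcases eq_or_ne n 0 with rfl | hn
  · obtain rfl : j = k := by
      have := h
      simp at this
      omega
    rfl
  · have hm : k % n = j % n := Int.modEq_iff_dvd.mpr h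
    simp [hn, hm]

lemma col_succ {n : ℕ} (hn : n ≠ 1) (k : ℤ) : col n (k + 1) ≠ col n k := by
  unfold col
  rcases eq_or_ne n 0 with rfl | h0
  · simp only [if_true]
    have h2 : k % 2 = 0 ∨ k % 2 = 1 := by omega
    rcases h2 with h | h <;> · simp [h, Int.add_emod]
  · have hn2 : 2 ≤ n := by omega
    have hnz : (0:ℤ) < n := by exact_mod_cast Nat.pos_of_ne_zero h0
    have hm0 : 0 ≤ k % n := Int.emod_nonneg _ (by positivity)
    have hm1 : k % n < n := Int.emod_lt_of_pos _ hnz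
    set m := k % n with hm
    have hsucc : (k + 1) % n = if m = (n:ℤ) - 1 then 0 else m + 1 := by
      rw [Int.add_emod, ← hm]
      split_ifs with h
      · rw [h]; simp [Int.emod_emod_of_dvd]
      · have : (1:ℤ) % n = 1 := Int.emod_eq_of_lt (by norm_num) (by exact_mod_cast hn2)
        rw [this, Int.emod_eq_of_lt (by omega) (by omega)]
    simp only [h0, if_false, hsucc]
    split_ifs with h1 h2 h3 h4 h5 h6 h7 <;> first | decide | omega

/-- If every nontrivial element of `G` is conjugate to a fixed `a ≠ 1` (as in Osin's
monster groups, where any two nontrivial elements are conjugate), then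
`X = {x : G → Fin 3 | ∀ g, x (g * a) ≠ x g}` is nonempty and `Stab(x) = {1}` for every
`x ∈ X`. -/
theorem stmt_12 {G : Type*} [Group G] (a : G) (ha : a ≠ 1)
    (hconj : ∀ g : G, g ≠ 1 → ∃ h : G, h * g * h⁻¹ = a) :
    ({x : G → Fin 3 | ∀ g : G, x (g * a) ≠ x g}).Nonempty ∧
      (∀ x ∈ {x : G → Fin 3 | ∀ g : G, x (g * a) ≠ x g}, Stab x = ({1} : Set G)) := by
  classical
  constructor
  · set n := orderOf a with hn
    have hn1 : n ≠ 1 := by simpa [hn, orderOf_eq_one_iff] using ha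
    set H := Subgroup.zpowers a with hH
    have hk : ∀ g : G, ∃ k : ℤ, ((QuotientGroup.mk g : G ⧸ H).out)⁻¹ * g = a ^ k := by
      intro g
      have hmem : ((QuotientGroup.mk g : G ⧸ H).out)⁻¹ * g ∈ H := by
        rw [← QuotientGroup.eq]
        exact Quotient.out_eq _
      obtain ⟨k, hk⟩ := Subgroup.mem_zpowers_iff.mp hmem
      exact ⟨k, hk.symm⟩
    choose k hk using hk
    refine ⟨fun g => col n (k g), fun g => ?_⟩
    have hq : (QuotientGroup.mk (g * a) : G ⧸ H) = QuotientGroup.mk g := by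
      rw [QuotientGroup.eq]
      have : (g * a)⁻¹ * g = a⁻¹ := by group
      rw [this]
      exact inv_mem (Subgroup.mem_zpowers a)
    have h1 : a ^ k (g * a) = a ^ (k g + 1) := by
      have h2 := hk (g * a)
      rw [hq] at h2
      rw [← h2, zpow_add, zpow_one, ← hk g]
      group
    have hdvd : (n : ℤ) ∣ k (g * a) - (k g + 1) := by
      rw [hn, orderOf_dvd_iff_zpow_eq_one, zpow_sub, h1, mul_inv_cancel]
    have := col_congr n hdvd
    simp only [Set.mem_setOf_eq]
    rw [this]
    exact col_succ hn1 (k g)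
  · intro x hx
    ext g
    simp only [Stab, Set.mem_setOf_eq, Set.mem_singleton_iff]
    constructor
    · intro hg
      by_contra hne
      obtain ⟨h, hh⟩ := hconj g hne
      have hgx : ∀ t : G, x (g * t) = x t := by
        intro t
        have := congrFun hg (g * t)
        simpa [Shift] using this.symm
      apply hx h⁻¹
      have heq : h⁻¹ * a = g * h⁻¹ := by rw [← hh]; group
      rw [heq, hgx h⁻¹]
    · rintro rfl
      funext t
      simp [Shift]
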